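/- arXiv:2310.07565 — 2 statements merged into one kernel-verified Lean document; each statement's English description precedes it below -/
import Mathlib

section
/- Assume conditions A2(δ) for some δ > 0 and A5. Then there exists a constant c > 0 such that, P-almost surely: (i) sup_{n≥1} sup_{x≠x' ∈ 𝕊₊^{d−1}} |S_n^x − S_n^{x'}| / d(x,x') ≤ c, and (ii) sup_{n≥1} sup_{x≠x' ∈ 𝕊₊^{d−1}} |min_{1≤j≤n} S_j^x − min_{1≤j≤n} S_j^{x'}| / d(x,x') ≤ c. -/
open MeasureTheory ProbabilityTheory Filter Set

noncomputable section

namespace PRM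

/-- The space of `d × d` real matrices, viewed as functions. -/
abbrev Mat (d : ℕ) := Fin d → Fin d → ℝ

variable {d : ℕ}

/-- The norm `|x| = ∑ i |⟨x, e i⟩|` on `ℝ^d`. -/
def vnorm (x : Fin d → ℝ) : ℝ := ∑ i, |x i|

/-- The part `𝕊₊^{d-1}` of the unit sphere lying in the nonnegative quadrant. -/
def sph (d : ℕ) : Set (Fin d → ℝ) := {x | (∀ i, 0 ≤ x i) ∧ vnorm x = 1}

/-- Matrix-vector multiplication. -/
def mulVec (g : Mat d) (x : Fin d → ℝ) : Fin d → ℝ := fun i => ∑ j, g i j * x j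

/-- Matrix multiplication. -/
def matMul (a b : Mat d) : Mat d := fun i j => ∑ k, a i k * b k j

/-- The identity matrix. -/
def idMat (d : ℕ) : Mat d := fun i j => if i = j then 1 else 0

/-- Left product `g (n-1) * ⋯ * g 0` (i.e. `g_n ⋯ g_1` with 1-based indexing). -/
def prodL (g : ℕ → Mat d) : ℕ → Mat d
  | 0 => idMat d
  | n + 1 => matMul (g n) (prodL g n)

/-- The projective action `g · x = g x / |g x|`. -/
def act (g : Mat d) (x : Fin d → ℝ) : Fin d → ℝ := (vnorm (mulVec g x))⁻¹ • mulVec g x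

/-- The matrix norm `‖g‖ = sup_{x ∈ 𝕊₊^{d-1}} |gx|`. -/
def matNorm (g : Mat d) : ℝ := ⨆ x : sph d, vnorm (mulVec g x.val)

/-- `ι(g) = inf_{x ∈ 𝕊₊^{d-1}} |gx|`. -/
def iotaN (g : Mat d) : ℝ := ⨅ x : sph d, vnorm (mulVec g x.val)

/-- `N(g) = max (‖g‖, ι(g)⁻¹)`. -/
def NN (g : Mat d) : ℝ := max (matNorm g) (iotaN g)⁻¹

/-- Transpose of a matrix. -/
def transp (g : Mat d) : Mat d := fun i j => g j i

/-- A matrix is allowable if it has nonnegative entries and every row and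
every column contains a strictly positive entry. -/
def Allow (g : Mat d) : Prop :=
  (∀ i j, 0 ≤ g i j) ∧ (∀ i, ∃ j, 0 < g i j) ∧ (∀ j, ∃ i, 0 < g i j)

variable {Ω : Type*} [MeasurableSpace Ω]

/-- `S_n^x = log |g_n ⋯ g_1 x|`. -/
def Sn (gs : ℕ → Ω → Mat d) (x : Fin d → ℝ) (n : ℕ) (ω : Ω) : ℝ :=
  Real.log (vnorm (mulVec (prodL (fun k => gs k ω) n) x))

/-- `X_n^x = (g_n ⋯ g_1) · x`. -/
def Xn (gs : ℕ → Ω → Mat d) (x : Fin d → ℝ) (n : ℕ) (ω : Ω) : Fin d → ℝ :=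
  act (prodL (fun k => gs k ω) n) x

/-- The event `{τ_{x,y} > n}`, i.e. `y + S_k^x ≥ 0` for `1 ≤ k ≤ n`. -/
def stay (gs : ℕ → Ω → Mat d) (x : Fin d → ℝ) (y : ℝ) (n : ℕ) : Set Ω :=
  {ω | ∀ k, 1 ≤ k → k ≤ n → 0 ≤ y + Sn gs x k ω}

/-- The dual walk `S_n^{x,*} = - log |g_nᵀ ⋯ g_1ᵀ x|`. -/
def SnStar (gs : ℕ → Ω → Mat d) (x : Fin d → ℝ) (n : ℕ) (ω : Ω) : ℝ :=
  - Real.log (vnorm (mulVec (prodL (fun k => transp (gs k ω)) n) x))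

/-- The event `{τ*_{x,y} > n}` for the dual walk. -/
def stayStar (gs : ℕ → Ω → Mat d) (x : Fin d → ℝ) (y : ℝ) (n : ℕ) : Set Ω :=
  {ω | ∀ k, 1 ≤ k → k ≤ n → 0 ≤ y + SnStar gs x k ω}

/-- `(g n)` is an i.i.d. sequence with common law `μ`. -/
def IID (P : Measure Ω) (gs : ℕ → Ω → Mat d) (μ : Measure (Mat d)) : Prop :=
  (∀ n, Measurable (gs n)) ∧ iIndepFun gs P ∧
    ∀ n, Measure.map (gs n) P = μ

/-- Condition A1: with positive probability, some product `g_n ⋯ g_1` has all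
entries strictly positive. -/
def CondA1 (P : Measure Ω) (gs : ℕ → Ω → Mat d) : Prop :=
  0 < P {ω | ∃ n, 1 ≤ n ∧ ∀ i j, 0 < prodL (fun k => gs k ω) n i j}

/-- Condition A2(δ): moment condition `∫ (log N g)^{2+δ} dμ < ∞`. -/
def CondA2 (μ : Measure (Mat d)) (δ : ℝ) : Prop :=
  Integrable (fun g => Real.log (NN g) ^ ((2 : ℝ) + δ)) μ

/-- Condition A3: the Lyapunov exponent vanishes, `S_n^x / n → 0` a.s. -/
def CondA3 (P : Measure Ω) (gs : ℕ → Ω → Mat d) : Prop :=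
  ∀ x ∈ sph d, ∀ᵐ ω ∂P, Tendsto (fun n => Sn gs x n ω / n) atTop (nhds 0)

/-- The support of a measure on a topological space. -/
def msupp {α : Type*} [TopologicalSpace α] [MeasurableSpace α] (m : Measure α) : Set α :=
  {a | ∀ U, IsOpen U → a ∈ U → 0 < m U}

/-- Condition A4: the measure `μ` is non-arithmetic. -/
def CondA4 (μ : Measure (Mat d)) (ν : Measure (Fin d → ℝ)) : Prop :=
  ¬ ∃ (t θ : ℝ) (φ : (Fin d → ℝ) → ℝ), 0 < t ∧ θ ∈ Ico 0 (2 * Real.pi) ∧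
      ContinuousOn φ (sph d) ∧
      ∀ n, 1 ≤ n → ∀ gseq : ℕ → Mat d, (∀ k < n, gseq k ∈ msupp μ) →
        ∀ x ∈ msupp ν,
          Complex.exp (t * Real.log (vnorm (mulVec (prodL gseq n) x)) * Complex.I) *
              (φ (act (prodL gseq n) x) : ℂ) =
            Complex.exp (n * θ * Complex.I) * (φ x : ℂ)

/-- Condition A5 (Furstenberg–Kesten): for `μ`-a.e. `g` the entries of `g` are
positive and `max_{i,j} g^{i,j} ≤ κ · min_{k,l} g^{k,l}`. -/
def CondA5 (μ : Measure (Mat d)) (κ : ℝ) : Prop :=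
  1 < κ ∧ ∀ᵐ g ∂μ, (∀ i j, 0 < g i j) ∧ ∀ i j k l, g i j ≤ κ * g k l

/-- `ν` is a probability measure on `𝕊₊^{d-1}` which is `μ`-invariant. -/
def Invariant (μ : Measure (Mat d)) (ν : Measure (Fin d → ℝ)) : Prop :=
  IsProbabilityMeasure ν ∧ ν (sph d)ᶜ = 0 ∧
    ∀ s : Set (Fin d → ℝ), MeasurableSet s →
      ν s = ∫⁻ g, ν ((fun x => act g x) ⁻¹' s) ∂μ

/-- `σ² = lim (1/n) E[(S_n^x)²]`, with `σ > 0`. -/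
def SigmaLim (P : Measure Ω) (gs : ℕ → Ω → Mat d) (σ : ℝ) : Prop :=
  0 < σ ∧ ∀ x ∈ sph d,
    Tendsto (fun n : ℕ => (∫ ω, (Sn gs x n ω) ^ 2 ∂P) / n) atTop (nhds (σ ^ 2))

/-- `V(x,y) = lim_n E[(y + S_n^x) 1_{τ_{x,y} > n}]`. -/
def VLim (P : Measure Ω) (gs : ℕ → Ω → Mat d) (V : (Fin d → ℝ) → ℝ → ℝ) : Prop :=
  ∀ x ∈ sph d, ∀ y : ℝ,
    Tendsto (fun n => ∫ ω in stay gs x y n, (y + Sn gs x n ω) ∂P) atTop (nhds (V x y))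

/-- `V*(x,y) = lim_n E[(y + S_n^{x,*}) 1_{τ*_{x,y} > n}]`. -/
def VStarLim (P : Measure Ω) (gs : ℕ → Ω → Mat d) (V : (Fin d → ℝ) → ℝ → ℝ) : Prop :=
  ∀ x ∈ sph d, ∀ y : ℝ,
    Tendsto (fun n => ∫ ω in stayStar gs x y n, (y + SnStar gs x n ω) ∂P) atTop
      (nhds (V x y))

/-- The standard normal cumulative distribution function. -/
def gaussCDF (y : ℝ) : ℝ := ∫ t in Iic y, (Real.sqrt (2 * Real.pi))⁻¹ * Real.exp (-t ^ 2 / 2)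

/-- The standard normal density. -/
def gaussDens (u : ℝ) : ℝ := (Real.sqrt (2 * Real.pi))⁻¹ * Real.exp (-u ^ 2 / 2)

/-- `H(y) = 2Φ(y) - 1`. -/
def Hfun (y : ℝ) : ℝ := 2 * gaussCDF y - 1

/-- `ψ(y,z) = (1/√(2π)) (e^{-(y-z)²/2} - e^{-(y+z)²/2})`. -/
def psiF (y z : ℝ) : ℝ :=
  (Real.sqrt (2 * Real.pi))⁻¹ * (Real.exp (-(y - z) ^ 2 / 2) - Real.exp (-(y + z) ^ 2 / 2))

/-- `ℓ(y,z) = ψ(y,z)/H(y)`. -/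
def ellF (y z : ℝ) : ℝ := psiF y z / Hfun y

/-- `L(y) = H(y)/y` for `y ≠ 0`, `L(0) = 2/√(2π)`. -/
def Lfun (y : ℝ) : ℝ := if y = 0 then 2 / Real.sqrt (2 * Real.pi) else Hfun y / y

/-- `V_n(x,y) = V(x,y) L(y/(σ√n))`. -/
def Vnf (V : (Fin d → ℝ) → ℝ → ℝ) (σ : ℝ) (n : ℕ) (x : Fin d → ℝ) (y : ℝ) : ℝ :=
  V x y * Lfun (y / (σ * Real.sqrt n))

/-- `m(x, x') = min_i ⟨x,e_i⟩/⟨x',e_i⟩`. -/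
def mrat (x x' : Fin d → ℝ) : ℝ := ⨅ i, x i / x' i

/-- The Hilbert cross-ratio metric on `𝕊₊^{d-1}`. -/
def hdist (x x' : Fin d → ℝ) : ℝ :=
  (1 - mrat x x' * mrat x' x) / (1 + mrat x x' * mrat x' x)

/-- `‖φ‖_∞` over the sphere. -/
def supNorm (φ : (Fin d → ℝ) → ℝ) : ℝ := ⨆ x : sph d, |φ x.val|

/-- The norm `‖φ‖_𝓑 = ‖φ‖_∞ + sup_{x ≠ x'} |φ(x) - φ(x')| / d(x,x')`. -/
def bNorm (φ : (Fin d → ℝ) → ℝ) : ℝ :=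
  supNorm φ + ⨆ p : {p : sph d × sph d // p.1 ≠ p.2},
    |φ p.val.1.val - φ p.val.2.val| / hdist p.val.1.val p.val.2.val

/-- Membership in the Banach space `𝓑` of bounded Lipschitz functions. -/
def memB (φ : (Fin d → ℝ) → ℝ) : Prop :=
  ContinuousOn φ (sph d) ∧ (∃ C, ∀ x ∈ sph d, |φ x| ≤ C) ∧
    ∃ C, ∀ x ∈ sph d, ∀ x' ∈ sph d, |φ x - φ x'| ≤ C * hdist x x'

/-- `‖F‖_𝓗 = ∫ ‖F(·,y)‖_𝓑 dy`. -/
def HNorm (F : (Fin d → ℝ) → ℝ → ℝ) : ℝ := ∫ y, bNorm (fun x => F x y)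

/-- Membership in the class `𝓗`. -/
def memH (F : (Fin d → ℝ) → ℝ → ℝ) : Prop :=
  Integrable (fun y => bNorm (fun x => F x y)) ∧
    (∀ y, ∃ C, ∀ x ∈ sph d, ∀ x' ∈ sph d, |F x y - F x' y| ≤ C * hdist x x') ∧
    ∀ x, Measurable fun y => F x y

/-- `‖F‖_{ν ⊗ Leb} = ∫∫ |F(x,y)| ν(dx) dy`. -/
def nuLeb (ν : Measure (Fin d → ℝ)) (F : (Fin d → ℝ) → ℝ → ℝ) : ℝ :=
  ∫ x, (∫ y, |F x y|) ∂ν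

/-- `F ≤_ε H`: `F(x,y) ≤ H(x, y + v)` for all `x ∈ 𝕊₊^{d-1}`, `y ∈ ℝ`, `|v| ≤ ε`. -/
def domBy (ε : ℝ) (F H : (Fin d → ℝ) → ℝ → ℝ) : Prop :=
  ∀ x ∈ sph d, ∀ y v : ℝ, |v| ≤ ε → F x y ≤ H x (y + v)

/-- `min_{1 ≤ j ≤ n} S_j^x`. -/
def minS (gs : ℕ → Ω → Mat d) (x : Fin d → ℝ) (n : ℕ) (ω : Ω) : ℝ :=
  ⨅ j : Fin n, Sn gs x (j.val + 1) ω

/-! For `A ≥ 0` and `x` in the simplex, `|A x| = c ⬝ᵥ x` with `c` the vector of column sums of `A`.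
Under A5 every product `g_n ⋯ g_1` inherits from `g_1` the bound `κ` on the ratio of two entries
of a row, so the entries of `c` are within a factor `κ` of each other. Hence
`|log (c ⬝ᵥ x) - log (c ⬝ᵥ x')|` is at most `log κ`, and, since `m(x,x') x' ≤ x` coordinatewise,
also at most `-log (m(x,x') m(x',x))`. The second bound is of order `d(x,x')` near the diagonal,
the first handles the pairs with `d(x,x') ≥ 1/3`; neither depends on `n`. Minima over `j ≤ n`
are `1`-Lipschitz for the sup norm, which gives the second estimate. -/

open Real

lemma sum_eq_one_of_mem_sph {x : Fin d → ℝ} (hx : x ∈ sph d) : ∑ i, x i = 1 := by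
  rw [← hx.2, vnorm]
  exact Finset.sum_congr rfl fun i _ => (abs_of_nonneg (hx.1 i)).symm

lemma nonempty_of_mem_sph {x : Fin d → ℝ} (hx : x ∈ sph d) : Nonempty (Fin d) := by
  by_contra h
  rw [not_nonempty_iff] at h
  simpa using sum_eq_one_of_mem_sph hx

lemma dotProduct_le_of_le {c x : Fin d → ℝ} {b : ℝ} (hx : x ∈ sph d) (hc : ∀ j, c j ≤ b) :
    c ⬝ᵥ x ≤ b :=
  calc c ⬝ᵥ x ≤ ∑ j, b * x j :=
        Finset.sum_le_sum fun j _ => mul_le_mul_of_nonneg_right (hc j) (hx.1 j)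
    _ = b := by rw [← Finset.mul_sum, sum_eq_one_of_mem_sph hx, mul_one]

lemma le_dotProduct_of_le {c x : Fin d → ℝ} {b : ℝ} (hx : x ∈ sph d) (hc : ∀ j, b ≤ c j) :
    b ≤ c ⬝ᵥ x :=
  calc b = ∑ j, b * x j := by rw [← Finset.mul_sum, sum_eq_one_of_mem_sph hx, mul_one]
    _ ≤ c ⬝ᵥ x := Finset.sum_le_sum fun j _ => mul_le_mul_of_nonneg_right (hc j) (hx.1 j)

lemma dotProduct_le_mul_dotProduct {c x x' : Fin d → ℝ} {κ : ℝ} (hc : ∀ j l, c j ≤ κ * c l)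
    (hx : x ∈ sph d) (hx' : x' ∈ sph d) : c ⬝ᵥ x ≤ κ * (c ⬝ᵥ x') := by
  rw [← smul_eq_mul, ← smul_dotProduct]
  exact le_dotProduct_of_le hx' fun l => dotProduct_le_of_le hx fun j => hc j l

lemma dotProduct_pos {c x : Fin d → ℝ} (hc : ∀ j, 0 < c j) (hx : x ∈ sph d) : 0 < c ⬝ᵥ x := by
  obtain ⟨i, hi⟩ : ∃ i, 0 < x i := by
    by_contra! h
    linarith [sum_eq_one_of_mem_sph hx, Finset.sum_nonpos fun i (_ : i ∈ Finset.univ) => h i]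
  exact Finset.sum_pos' (fun j _ => mul_nonneg (hc j).le (hx.1 j))
    ⟨i, Finset.mem_univ _, mul_pos (hc i) hi⟩

lemma mrat_nonneg {x x' : Fin d → ℝ} (hx : ∀ i, 0 ≤ x i) (hx' : ∀ i, 0 ≤ x' i) :
    0 ≤ mrat x x' :=
  Real.iInf_nonneg fun i => div_nonneg (hx i) (hx' i)

lemma mrat_mul_le {x x' : Fin d → ℝ} (hx : ∀ i, 0 ≤ x i) (hx' : ∀ i, 0 ≤ x' i) (i : Fin d) :
    mrat x x' * x' i ≤ x i := by
  rcases (hx' i).eq_or_lt with h | h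
  · rw [← h, mul_zero]
    exact hx i
  · exact (le_div_iff₀ h).mp (ciInf_le (Finite.bddBelow_range _) i)

lemma mrat_le_one {x x' : Fin d → ℝ} (hx : x ∈ sph d) (hx' : x' ∈ sph d) : mrat x x' ≤ 1 :=
  calc mrat x x' = ∑ i, mrat x x' * x' i := by
        rw [← Finset.mul_sum, sum_eq_one_of_mem_sph hx', mul_one]
    _ ≤ ∑ i, x i := Finset.sum_le_sum fun i _ => mrat_mul_le hx.1 hx'.1 i
    _ = 1 := sum_eq_one_of_mem_sph hx

lemma mrat_mul_dotProduct_le {c x x' : Fin d → ℝ} (hc : ∀ j, 0 ≤ c j) (hx : ∀ i, 0 ≤ x i)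
    (hx' : ∀ i, 0 ≤ x' i) : mrat x x' * (c ⬝ᵥ x') ≤ c ⬝ᵥ x := by
  rw [dotProduct, Finset.mul_sum]
  refine Finset.sum_le_sum fun j _ => ?_
  rw [mul_left_comm]
  exact mul_le_mul_of_nonneg_left (mrat_mul_le hx hx' j) (hc j)

lemma abs_log_sub_le_max {a b m m' : ℝ} (ha : 0 < a) (hb : 0 < b) (hm : 0 < m) (hm' : 0 < m')
    (hma : m * b ≤ a) (hmb : m' * a ≤ b) : |log a - log b| ≤ max (-log m) (-log m') := by
  have h₁ : log m + log b ≤ log a := by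
    rw [← log_mul hm.ne' hb.ne']
    exact log_le_log (mul_pos hm hb) hma
  have h₂ : log m' + log a ≤ log b := by
    rw [← log_mul hm'.ne' ha.ne']
    exact log_le_log (mul_pos hm' ha) hmb
  have hl := le_max_left (-log m) (-log m')
  have hr := le_max_right (-log m) (-log m')
  rw [abs_sub_le_iff]
  constructor <;> linarith

lemma abs_log_sub_le_hilbert {a b κ m m' : ℝ} (ha : 0 < a) (hb : 0 < b)
    (hab : a ≤ κ * b) (hba : b ≤ κ * a) (hm₀ : 0 ≤ m) (hm₁ : m ≤ 1) (hm'₀ : 0 ≤ m') (hm'₁ : m' ≤ 1)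
    (hma : m * b ≤ a) (hmb : m' * a ≤ b) :
    |log a - log b| ≤ (4 + 3 * log κ) * ((1 - m * m') / (1 + m * m')) := by
  set t := m * m'
  have ht₀ : 0 ≤ t := mul_nonneg hm₀ hm'₀
  have ht₁ : t ≤ 1 := mul_le_one₀ hm₁ hm'₀ hm'₁
  have hκ : 0 < κ := pos_of_mul_pos_left (ha.trans_le hab) hb.le
  have hlogκ : |log a - log b| ≤ log κ := by
    simpa [log_inv] using abs_log_sub_le_max ha hb (inv_pos.mpr hκ) (inv_pos.mpr hκ)
      ((inv_mul_le_iff₀ hκ).mpr hba) ((inv_mul_le_iff₀ hκ).mpr hab)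
  have hlogκ₀ : 0 ≤ log κ := (abs_nonneg _).trans hlogκ
  have hD : 0 ≤ (1 - t) / (1 + t) := div_nonneg (by linarith) (by linarith)
  have hκD : 0 ≤ log κ * ((1 - t) / (1 + t)) := mul_nonneg hlogκ₀ hD
  rcases lt_or_ge t (1 / 2) with ht | ht
  · have hD₃ : 1 / 3 ≤ (1 - t) / (1 + t) := by
      rw [le_div_iff₀ (by linarith)]
      linarith
    linarith [mul_le_mul_of_nonneg_left hD₃ hlogκ₀]
  · -- near the diagonal, `-log t ≤ 1/t - 1` is comparable to `(1 - t) / (1 + t)`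
    have htm : t ≤ m := mul_le_of_le_one_right hm₀ hm'₁
    have htm' : t ≤ m' := mul_le_of_le_one_left hm'₀ hm₁
    have htpos : 0 < t := by linarith
    have hmax : |log a - log b| ≤ -log t := by
      have hm := log_nonpos hm₀ hm₁
      have hm' := log_nonpos hm'₀ hm'₁
      rw [log_mul (htpos.trans_le htm).ne' (htpos.trans_le htm').ne']
      refine (abs_log_sub_le_max ha hb (htpos.trans_le htm) (htpos.trans_le htm') hma hmb).trans
        (max_le ?_ ?_) <;> linarith
    have hlog : -log t ≤ (1 - t) / t := by
      have := log_le_sub_one_of_pos (inv_pos.mpr htpos)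
      rw [log_inv] at this
      rwa [sub_div, div_self htpos.ne', one_div]
    have : (1 - t) / t ≤ 4 * ((1 - t) / (1 + t)) := by
      rw [mul_div_assoc', div_le_div_iff₀ htpos (by linarith)]
      nlinarith
    linarith

lemma vnorm_mulVec_eq_dotProduct {A : Mat d} (hA : ∀ i j, 0 ≤ A i j) {x : Fin d → ℝ}
    (hx : ∀ i, 0 ≤ x i) : vnorm (mulVec A x) = (fun j => ∑ i, A i j) ⬝ᵥ x := by
  simp only [vnorm, mulVec, dotProduct, Finset.sum_mul]
  rw [Finset.sum_comm]
  refine Finset.sum_congr rfl fun i _ => abs_of_nonneg ?_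
  exact Finset.sum_nonneg fun j _ => mul_nonneg (hA i j) (hx j)

lemma abs_log_vnorm_mulVec_sub_le {κ : ℝ} {A : Mat d} (hA : ∀ i j, 0 < A i j)
    (hrow : ∀ i j l, A i j ≤ κ * A i l) {x x' : Fin d → ℝ} (hx : x ∈ sph d) (hx' : x' ∈ sph d) :
    |log (vnorm (mulVec A x)) - log (vnorm (mulVec A x'))| ≤ (4 + 3 * log κ) * hdist x x' := by
  have := nonempty_of_mem_sph hx
  set c : Fin d → ℝ := fun j => ∑ i, A i j
  have hc : ∀ j, 0 < c j := fun j => Finset.sum_pos (fun i _ => hA i j) Finset.univ_nonempty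
  have hcκ : ∀ j l, c j ≤ κ * c l := fun j l => by
    simp only [c, Finset.mul_sum]
    exact Finset.sum_le_sum fun i _ => hrow i j l
  rw [vnorm_mulVec_eq_dotProduct (fun i j => (hA i j).le) hx.1,
    vnorm_mulVec_eq_dotProduct (fun i j => (hA i j).le) hx'.1]
  exact abs_log_sub_le_hilbert (dotProduct_pos hc hx) (dotProduct_pos hc hx')
    (dotProduct_le_mul_dotProduct hcκ hx hx') (dotProduct_le_mul_dotProduct hcκ hx' hx)
    (mrat_nonneg hx.1 hx'.1) (mrat_le_one hx hx') (mrat_nonneg hx'.1 hx.1) (mrat_le_one hx' hx)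
    (mrat_mul_dotProduct_le (fun j => (hc j).le) hx.1 hx'.1)
    (mrat_mul_dotProduct_le (fun j => (hc j).le) hx'.1 hx.1)

lemma prodL_one (g : ℕ → Mat d) : prodL g 1 = g 0 := by
  funext i j
  simp [prodL, matMul, idMat]

lemma prodL_succ_pos [Nonempty (Fin d)] {g : ℕ → Mat d} (hg : ∀ k i j, 0 < g k i j) :
    ∀ n i j, 0 < prodL g (n + 1) i j
  | 0 => by rw [prodL_one]; exact hg 0
  | n + 1 => fun i j => Finset.sum_pos
      (fun k _ => mul_pos (hg (n + 1) i k) (prodL_succ_pos hg n k j)) Finset.univ_nonempty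

lemma matMul_row_le {κ : ℝ} {A B : Mat d} (hA : ∀ i j, 0 ≤ A i j)
    (hB : ∀ i j l, B i j ≤ κ * B i l) (i j l : Fin d) : matMul A B i j ≤ κ * matMul A B i l := by
  rw [matMul, matMul, Finset.mul_sum]
  refine Finset.sum_le_sum fun k _ => ?_
  rw [mul_left_comm]
  exact mul_le_mul_of_nonneg_left (hB k j l) (hA i k)

lemma prodL_succ_row_le {κ : ℝ} {g : ℕ → Mat d} (hg : ∀ k i j, 0 ≤ g k i j)
    (hrow : ∀ i j l, g 0 i j ≤ κ * g 0 i l) :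
    ∀ n i j l, prodL g (n + 1) i j ≤ κ * prodL g (n + 1) i l
  | 0 => by rw [prodL_one]; exact hrow
  | n + 1 => matMul_row_le (hg (n + 1)) (prodL_succ_row_le hg hrow n)

lemma abs_ciInf_sub_ciInf_le {ι : Type*} [Finite ι] [Nonempty ι] {f g : ι → ℝ} {C : ℝ}
    (h : ∀ i, |f i - g i| ≤ C) : |(⨅ i, f i) - ⨅ i, g i| ≤ C := by
  have key : ∀ f g : ι → ℝ, (∀ i, |f i - g i| ≤ C) → (⨅ i, f i) - C ≤ ⨅ i, g i :=
    fun f g h => le_ciInf fun i => by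
      linarith [ciInf_le (Finite.bddBelow_range f) i, (abs_le.mp (h i)).2]
  rw [abs_sub_le_iff]
  constructor
  · linarith [key f g h]
  · linarith [key g f fun i => by rw [abs_sub_comm]; exact h i]

lemma ae_forall_apply_of_map_eq {α : Type*} [MeasurableSpace α] {P : Measure Ω} {X : ℕ → Ω → α}
    {μ : Measure α} (hX : ∀ n, AEMeasurable (X n) P) (hlaw : ∀ n, P.map (X n) = μ)
    {p : α → Prop} (hp : ∀ᵐ a ∂μ, p a) : ∀ᵐ ω ∂P, ∀ n, p (X n ω) :=
  ae_all_iff.mpr fun n => ae_of_ae_map (hX n) ((hlaw n).symm ▸ hp)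

theorem as_contraction_FK_general
    (P : Measure Ω)
    (gs : ℕ → Ω → Mat d) (μ : Measure (Mat d))
    (hiid : IID P gs μ)
    (κ : ℝ) (hA5 : CondA5 μ κ) :
    ∃ c : ℝ, 0 < c ∧ ∀ᵐ ω ∂P, ∀ n : ℕ, 1 ≤ n → ∀ x ∈ sph d, ∀ x' ∈ sph d,
      |Sn gs x n ω - Sn gs x' n ω| ≤ c * hdist x x' ∧
      |minS gs x n ω - minS gs x' n ω| ≤ c * hdist x x'  := by
  obtain ⟨hκ, hfk⟩ := hA5
  refine ⟨4 + 3 * log κ, by linarith [log_pos hκ], ?_⟩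
  filter_upwards [ae_forall_apply_of_map_eq (fun n => (hiid.1 n).aemeasurable) hiid.2.2 hfk]
    with ω hω n hn x hx x' hx'
  have := nonempty_of_mem_sph hx
  have hS : ∀ k, |Sn gs x (k + 1) ω - Sn gs x' (k + 1) ω| ≤ (4 + 3 * log κ) * hdist x x' :=
    fun k => abs_log_vnorm_mulVec_sub_le (prodL_succ_pos (fun k => (hω k).1) k)
      (prodL_succ_row_le (fun k i j => ((hω k).1 i j).le) (fun i j l => (hω 0).2 i j i l) k) hx hx'
  obtain ⟨n, rfl⟩ : ∃ m, n = m + 1 := ⟨n - 1, by omega⟩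
  exact ⟨hS n, abs_ciInf_sub_ciInf_le fun j => hS j⟩

theorem as_contraction_FK
    (hd : 2 ≤ d) (P : Measure Ω) [IsProbabilityMeasure P]
    (gs : ℕ → Ω → Mat d) (μ : Measure (Mat d)) [IsProbabilityMeasure μ]
    (hiid : IID P gs μ) (hallow : ∀ᵐ g ∂μ, Allow g)
    (δ : ℝ) (hδ : 0 < δ) (hA2 : CondA2 μ δ) (κ : ℝ) (hA5 : CondA5 μ κ) :
    ∃ c : ℝ, 0 < c ∧ ∀ᵐ ω ∂P, ∀ n : ℕ, 1 ≤ n → ∀ x ∈ sph d, ∀ x' ∈ sph d,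
      |Sn gs x n ω - Sn gs x' n ω| ≤ c * hdist x x' ∧
      |minS gs x n ω - minS gs x' n ω| ≤ c * hdist x x' :=
  as_contraction_FK_general P gs μ hiid κ hA5

end PRM
end
end

section
/- Assume condition A5 with constant κ > 1 and set γ = 2 log κ + log d. Then, P-almost surely, for every n ≥ 1, every x ∈ 𝕊₊^{d−1} and every 0 ≤ k ≤ n: S_{n−k}^{x,*} − γ ≤ S_k^x − S_n^x ≤ S_{n−k}^{x,*} + γ, where S_i^{x,*} = −log|g_{n−i+1}^T g_{n−i+2}^T ⋯ g_n^T x| is the dual walk built from the transposed matrices taken in reversed order (and S_0^x = S_0^{x,*} = 0). -/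
open MeasureTheory ProbabilityTheory Filter Set

noncomputable section

namespace PRM

variable {d : ℕ}

variable {Ω : Type*} [MeasurableSpace Ω]

/-- The reversed dual walk `S_i^{x,*} = - log |g_{n-i+1}ᵀ ⋯ g_nᵀ x|`, built
from the transposed matrices taken in reversed order within the first `n`. -/
def Sdrev {Ω : Type*} {d : ℕ} (gs : ℕ → Ω → Mat d) (n : ℕ) (x : Fin d → ℝ)
    (i : ℕ) (ω : Ω) : ℝ :=
  - Real.log (vnorm (mulVec (prodL (fun j => transp (gs (n - 1 - j) ω)) i) x))

/-!
Write `A = g_k ⋯ g_1`, `C = g_n ⋯ g_{k+1}` and `y = A x`, so that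
`S_k - S_n - S*_{n-k} = log (|y| |Cᵀ x| / |C y|)`. For nonnegative vectors,
`|C y| |x| = ∑_{a,b,j} C_{a j} y_j x_b` and `|y| |Cᵀ x| = ∑_{a,b,j} C_{b a} y_j x_b`, so the
two agree up to a factor `K` as soon as all entries of `C` agree up to `K`. Under A5 the entries
of each column of `C` are comparable up to `κ` through its leftmost factor, and those of each
row through its rightmost factor, so `K = κ²` works and the error is even at most `2 log κ`.
-/

lemma matMul_assoc (a b c : Mat d) : matMul (matMul a b) c = matMul a (matMul b c) :=
  Matrix.mul_assoc (Matrix.of a) (Matrix.of b) (Matrix.of c)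

lemma matMul_idMat (a : Mat d) : matMul a (idMat d) = a :=
  Matrix.mul_one (Matrix.of a)

lemma idMat_matMul (a : Mat d) : matMul (idMat d) a = a :=
  Matrix.one_mul (Matrix.of a)

lemma mulVec_idMat (x : Fin d → ℝ) : mulVec (idMat d) x = x :=
  Matrix.one_mulVec x

lemma mulVec_matMul (a b : Mat d) (x : Fin d → ℝ) :
    mulVec (matMul a b) x = mulVec a (mulVec b x) :=
  (Matrix.mulVec_mulVec x (Matrix.of a) (Matrix.of b)).symm

lemma transp_matMul (a b : Mat d) : transp (matMul a b) = matMul (transp b) (transp a) :=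
  Matrix.transpose_mul (Matrix.of a) (Matrix.of b)

lemma transp_idMat : transp (idMat d) = idMat d :=
  Matrix.transpose_one

lemma transp_transp (a : Mat d) : transp (transp a) = a := rfl

lemma prodL_congr {f f' : ℕ → Mat d} {m : ℕ} (h : ∀ j < m, f j = f' j) :
    prodL f m = prodL f' m := by
  induction m with
  | zero => rfl
  | succ m ih =>
    simp only [prodL]
    rw [ih fun j hj => h j (by omega), h m (by omega)]

lemma prodL_add (f : ℕ → Mat d) (k : ℕ) :
    ∀ m, prodL f (k + m) = matMul (prodL (fun j => f (k + j)) m) (prodL f k)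
  | 0 => (idMat_matMul _).symm
  | m + 1 => by
    show matMul (f (k + m)) (prodL f (k + m)) = _
    rw [prodL_add f k m, ← matMul_assoc]
    rfl

lemma prodL_succ' (f : ℕ → Mat d) (m : ℕ) :
    prodL f (m + 1) = matMul (prodL (fun j => f (j + 1)) m) (f 0) := by
  rw [add_comm, prodL_add]
  simp only [prodL, matMul_idMat, add_comm 1]

lemma prodL_transp_rev (f : ℕ → Mat d) (m : ℕ) :
    prodL (fun j => transp (f (m - 1 - j))) m = transp (prodL f m) := by
  induction m generalizing f with
  | zero => exact transp_idMat.symm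
  | succ m ih =>
    have hshift : prodL (fun j => transp (f (m - j))) m
        = prodL (fun j => transp (f (m - 1 - j + 1))) m :=
      prodL_congr fun j hj => by rw [show m - 1 - j + 1 = m - j by omega]
    rw [prodL_succ' f, transp_matMul, ← ih]
    simp only [prodL, Nat.add_sub_cancel, Nat.sub_self, hshift]

lemma vnorm_of_nonneg {x : Fin d → ℝ} (hx : ∀ i, 0 ≤ x i) : vnorm x = ∑ i, x i :=
  Finset.sum_congr rfl fun i _ => abs_of_nonneg (hx i)

lemma mulVec_nonneg {g : Mat d} {x : Fin d → ℝ} (hg : ∀ i j, 0 ≤ g i j)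
    (hx : ∀ i, 0 ≤ x i) (i : Fin d) : 0 ≤ mulVec g x i :=
  Finset.sum_nonneg fun j _ => mul_nonneg (hg i j) (hx j)

lemma vnorm_mulVec_mul_vnorm_le {K : ℝ} {C : Mat d} (hC : ∀ i j, 0 ≤ C i j)
    (hK : ∀ i j i' j', C i j ≤ K * C i' j') {x y : Fin d → ℝ} (hx : ∀ i, 0 ≤ x i)
    (hy : ∀ j, 0 ≤ y j) :
    vnorm (mulVec C y) * vnorm x ≤ K * (vnorm y * vnorm (mulVec (transp C) x)) := by
  rw [vnorm_of_nonneg hx, vnorm_of_nonneg hy, vnorm_of_nonneg (mulVec_nonneg hC hy),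
    vnorm_of_nonneg (mulVec_nonneg (g := transp C) (fun i j => hC j i) hx)]
  simp only [mulVec, transp, Finset.sum_mul, Finset.mul_sum]
  conv_rhs => rw [Finset.sum_comm]
  -- both sides are sums over triples `(a, b, j)`; compare the terms pairing `C a j` with `C b a`
  refine Finset.sum_le_sum fun b _ => Finset.sum_le_sum fun a _ =>
    Finset.sum_le_sum fun j _ => ?_
  calc C a j * y j * x b ≤ K * C b a * y j * x b :=
        mul_le_mul_of_nonneg_right (mul_le_mul_of_nonneg_right (hK a j b a) (hy j)) (hx b)
    _ = K * (y j * (C b a * x b)) := by ring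

lemma vnorm_mulVec_pos {g : Mat d} {x : Fin d → ℝ} (hg : ∀ i j, 0 < g i j)
    (hx : ∀ i, 0 ≤ x i) (hx0 : 0 < vnorm x) : 0 < vnorm (mulVec g x) := by
  rw [vnorm_of_nonneg hx, ← Finset.sum_const_zero] at hx0
  obtain ⟨j, -, hj⟩ := Finset.exists_lt_of_sum_lt hx0
  have hgx : ∀ i, 0 ≤ mulVec g x i := mulVec_nonneg (fun i j => (hg i j).le) hx
  rw [vnorm_of_nonneg hgx]
  refine Finset.sum_pos' (fun i _ => hgx i) ⟨j, Finset.mem_univ j, ?_⟩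
  exact Finset.sum_pos' (fun l _ => mul_nonneg (hg j l).le (hx l))
    ⟨j, Finset.mem_univ j, mul_pos (hg j j) hj⟩

lemma prodL_nonneg {f : ℕ → Mat d} (hf : ∀ m i j, 0 ≤ f m i j) (m : ℕ) (i j : Fin d) :
    0 ≤ prodL f m i j := by
  induction m generalizing i j with
  | zero => by_cases h : i = j <;> simp [prodL, idMat, h]
  | succ m ih =>
    show 0 ≤ ∑ l, f m i l * prodL f m l j
    exact Finset.sum_nonneg fun l _ => mul_nonneg (hf m i l) (ih l j)

lemma matMul_apply_le_of_col_le {κ : ℝ} {g B : Mat d} (hg : ∀ i i' l, g i l ≤ κ * g i' l)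
    (hB : ∀ l j, 0 ≤ B l j) (i i' j : Fin d) : matMul g B i j ≤ κ * matMul g B i' j := by
  simp only [matMul, Finset.mul_sum, ← mul_assoc]
  exact Finset.sum_le_sum fun l _ => mul_le_mul_of_nonneg_right (hg i i' l) (hB l j)

lemma matMul_apply_le_of_row_le {κ : ℝ} {B g : Mat d} (hB : ∀ i l, 0 ≤ B i l)
    (hg : ∀ l j j', g l j ≤ κ * g l j') (i j j' : Fin d) :
    matMul B g i j ≤ κ * matMul B g i j' := by
  simp only [matMul, Finset.mul_sum, mul_left_comm κ]
  exact Finset.sum_le_sum fun l _ => mul_le_mul_of_nonneg_left (hg l j j') (hB i l)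

lemma abs_log_sub_add_log_le {a b c K : ℝ} (ha : 0 < a) (hb : 0 < b) (hc : 0 < c)
    (hupper : a ≤ K * (b * c)) (hlower : b * c ≤ K * a) :
    |Real.log b - Real.log a + Real.log c| ≤ Real.log K := by
  have hK : 0 < K := pos_of_mul_pos_left ((mul_pos hb hc).trans_le hlower) ha.le
  have h₁ := Real.log_le_log ha hupper
  have h₂ := Real.log_le_log (mul_pos hb hc) hlower
  rw [Real.log_mul hK.ne' (mul_pos hb hc).ne', Real.log_mul hb.ne' hc.ne'] at h₁
  rw [Real.log_mul hK.ne' ha.ne', Real.log_mul hb.ne' hc.ne'] at h₂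
  rw [abs_le]
  constructor <;> linarith

/-- Condition A5 for a single matrix. -/
def FurstenbergKesten (κ : ℝ) (g : Mat d) : Prop :=
  (∀ i j, 0 < g i j) ∧ ∀ i j k l, g i j ≤ κ * g k l

section FurstenbergKesten

variable {κ : ℝ} {f : ℕ → Mat d}

lemma prodL_succ_pos_s18 (hf : ∀ m, FurstenbergKesten κ (f m)) (m : ℕ) (i j : Fin d) :
    0 < prodL f (m + 1) i j := by
  induction m generalizing i j with
  | zero => simpa only [prodL, matMul_idMat] using (hf 0).1 i j
  | succ m ih =>
    exact Finset.sum_pos (fun l _ => mul_pos ((hf (m + 1)).1 i l) (ih l j))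
      ⟨i, Finset.mem_univ i⟩

lemma prodL_succ_le (hκ : 0 ≤ κ) (hf : ∀ m, FurstenbergKesten κ (f m)) (m : ℕ)
    (i j i' j' : Fin d) : prodL f (m + 1) i j ≤ κ ^ 2 * prodL f (m + 1) i' j' := by
  have hnonneg : ∀ m i j, 0 ≤ f m i j := fun m i j => ((hf m).1 i j).le
  calc prodL f (m + 1) i j ≤ κ * prodL f (m + 1) i' j :=
        matMul_apply_le_of_col_le (fun i i' l => (hf m).2 i l i' l) (prodL_nonneg hnonneg m) i i' j
    _ ≤ κ * (κ * prodL f (m + 1) i' j') := by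
        gcongr
        rw [prodL_succ']
        exact matMul_apply_le_of_row_le (prodL_nonneg (fun m => hnonneg (m + 1)) m)
          (fun l j j' => (hf 0).2 l j l j') i' j j'
    _ = κ ^ 2 * prodL f (m + 1) i' j' := by ring

lemma vnorm_prodL_mulVec_pos (hf : ∀ m, FurstenbergKesten κ (f m)) {x : Fin d → ℝ}
    (hx : ∀ i, 0 ≤ x i) (hx0 : 0 < vnorm x) : ∀ k, 0 < vnorm (mulVec (prodL f k) x)
  | 0 => by rwa [prodL, mulVec_idMat]
  | k + 1 => vnorm_mulVec_pos (prodL_succ_pos_s18 hf k) hx hx0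

theorem abs_log_prodL_sub_le (hκ : 1 ≤ κ) (hf : ∀ m, FurstenbergKesten κ (f m))
    {x : Fin d → ℝ} (hx : x ∈ sph d) {k n : ℕ} (hk : k ≤ n) :
    |Real.log (vnorm (mulVec (prodL f k) x)) - Real.log (vnorm (mulVec (prodL f n) x))
        + Real.log (vnorm (mulVec (prodL (fun j => transp (f (n - 1 - j))) (n - k)) x))|
      ≤ 2 * Real.log κ := by
  obtain ⟨m, rfl⟩ := Nat.exists_eq_add_of_le hk
  have hdual : prodL (fun j => transp (f (k + m - 1 - j))) (k + m - k)
      = transp (prodL (fun j => f (k + j)) m) := by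
    rw [Nat.add_sub_cancel_left, ← prodL_transp_rev]
    exact prodL_congr fun j hj => by rw [show k + m - 1 - j = k + (m - 1 - j) by omega]
  rw [prodL_add, mulVec_matMul, hdual]
  set y := mulVec (prodL f k) x
  cases m with
  | zero =>
    simp only [prodL, transp_idMat, mulVec_idMat, hx.2, Real.log_one, sub_self, zero_add,
      abs_zero]
    exact mul_nonneg zero_le_two (Real.log_nonneg hκ)
  | succ m =>
    set C := prodL (fun j => f (k + j)) (m + 1)
    have hnonneg : ∀ m i j, 0 ≤ f m i j := fun m i j => ((hf m).1 i j).le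
    have hCpos : ∀ i j, 0 < C i j := prodL_succ_pos_s18 (fun j => hf (k + j)) m
    have hCle : ∀ i j i' j', C i j ≤ κ ^ 2 * C i' j' :=
      prodL_succ_le (by linarith) (fun j => hf (k + j)) m
    have hy : ∀ i, 0 ≤ y i := mulVec_nonneg (prodL_nonneg hnonneg k) hx.1
    have hy0 : 0 < vnorm y := vnorm_prodL_mulVec_pos hf hx.1 (by rw [hx.2]; exact one_pos) k
    have hupper := vnorm_mulVec_mul_vnorm_le (fun i j => (hCpos i j).le) hCle hx.1 hy
    have hlower := vnorm_mulVec_mul_vnorm_le (C := transp C) (fun i j => (hCpos j i).le)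
      (fun i j i' j' => hCle j i j' i') hy hx.1
    rw [hx.2, mul_one] at hupper
    rw [hx.2, one_mul, transp_transp, mul_comm] at hlower
    have hlog := abs_log_sub_add_log_le (vnorm_mulVec_pos hCpos hy hy0) hy0
      (vnorm_mulVec_pos (fun i j => hCpos j i) hx.1 (by rw [hx.2]; exact one_pos)) hupper hlower
    rwa [Real.log_pow, Nat.cast_ofNat] at hlog

end FurstenbergKesten

theorem approximate_duality_general
    (P : Measure Ω)
    (gs : ℕ → Ω → Mat d) (μ : Measure (Mat d))
    (hiid : IID P gs μ)
    (κ : ℝ) (hA5 : CondA5 μ κ) :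
    ∀ᵐ ω ∂P, ∀ n : ℕ, 1 ≤ n → ∀ x ∈ sph d, ∀ k : ℕ, k ≤ n →
      Sdrev gs n x (n - k) ω - (2 * Real.log κ + Real.log d) ≤
          Sn gs x k ω - Sn gs x n ω ∧
        Sn gs x k ω - Sn gs x n ω ≤
          Sdrev gs n x (n - k) ω + (2 * Real.log κ + Real.log d) := by
  obtain ⟨hκ, hμ⟩ := hA5
  have hP : ∀ᵐ ω ∂P, ∀ m, FurstenbergKesten κ (gs m ω) := ae_all_iff.2 fun m =>
    ae_of_ae_map (hiid.1 m).aemeasurable (by rw [hiid.2.2 m]; exact hμ)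
  filter_upwards [hP] with ω hω n _ x hx k hk
  have hbound := abs_le.1 (abs_log_prodL_sub_le hκ.le hω hx hk)
  have hlogd := Real.log_natCast_nonneg d
  simp only [Sn, Sdrev]
  constructor <;> linarith [hbound.1, hbound.2]

theorem approximate_duality
    (hd : 2 ≤ d) (P : Measure Ω) [IsProbabilityMeasure P]
    (gs : ℕ → Ω → Mat d) (μ : Measure (Mat d)) [IsProbabilityMeasure μ]
    (hiid : IID P gs μ) (hallow : ∀ᵐ g ∂μ, Allow g)
    (κ : ℝ) (hA5 : CondA5 μ κ) :
    ∀ᵐ ω ∂P, ∀ n : ℕ, 1 ≤ n → ∀ x ∈ sph d, ∀ k : ℕ, k ≤ n →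
      Sdrev gs n x (n - k) ω - (2 * Real.log κ + Real.log d) ≤
          Sn gs x k ω - Sn gs x n ω ∧
        Sn gs x k ω - Sn gs x n ω ≤
          Sdrev gs n x (n - k) ω + (2 * Real.log κ + Real.log d) :=
  approximate_duality_general P gs μ hiid κ hA5

end PRM
end
end
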